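/- Let g : ℍ → ℂ be holomorphic and SL₂(ℤ)-invariant, i.e. g(γ·τ) = g(τ) for all γ ∈ SL₂(ℤ) and τ ∈ ℍ. Suppose g is transcendental over ℂ(z), i.e. there is no nonzero polynomial P ∈ ℂ[X,Y] with P(τ, g(τ)) = 0 for all τ ∈ ℍ. Then there exist no polynomials p, q ∈ ℂ[X,Y] with q(τ, g(τ)) not identically zero on ℍ such that g′(τ)·q(τ, g(τ)) = p(τ, g(τ)) for all τ ∈ ℍ; that is, g satisfies no first-order differential equation g′ = f(z, g) with f a rational function over ℂ. -/

import Mathlib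

/-!
Periodicity `g (τ + 1) = g τ`, hence `g' (τ + 1) = g' τ`, and transcendence of `g` turn the
equation into the polynomial identity `p(X + 1, Y) q(X, Y) = p(X, Y) q(X + 1, Y)`. For each `y`
the ratio `p(·, y) / q(·, y)` is then a periodic rational function, hence constant, so
`g' = A(g) / B(g)` with `A = p(τ₀, ·)` and `B = q(τ₀, ·)`. Under `τ ↦ -1/τ` the right-hand side
is invariant while `g'(-1/τ) = τ² g'(τ)`, so `(τ² - 1) g' B(g) = 0`: `g' = 0`, and a constant `g`
is algebraic.
-/

namespace Polynomial

variable {R : Type*} [CommRing R] [IsDomain R]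

theorem comp_X_add_natCast_mul_eq_of_comp_X_add_one {a b : R[X]}
    (h : a.comp (X + 1) * b = a * b.comp (X + 1)) (hb : b ≠ 0) (n : ℕ) :
    a.comp (X + (n : R[X])) * b = a * b.comp (X + (n : R[X])) := by
  induction n with
  | zero => simp
  | succ n ih =>
    have hb₁ : b.comp (X + 1) ≠ 0 := by simp [comp_eq_zero_iff, hb]
    have hshift : (X + (n : R[X])).comp (X + 1) = X + ((n + 1 : ℕ) : R[X]) := by
      simp only [add_comp, X_comp, natCast_comp]; push_cast; ring
    have ih₁ := congrArg (·.comp (X + 1)) ih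
    simp only [mul_comp, comp_assoc, hshift] at ih₁
    apply mul_left_cancel₀ hb₁
    linear_combination b * ih₁ + b.comp (X + ((n + 1 : ℕ) : R[X])) * h

variable [CharZero R]

theorem eval_mul_eval_eq_of_ratio_periodic {a b : R[X]}
    (h : ∀ x, a.eval (x + 1) * b.eval x = a.eval x * b.eval (x + 1)) (x x₀ : R) :
    a.eval x * b.eval x₀ = b.eval x * a.eval x₀ := by
  rcases eq_or_ne b 0 with rfl | hb
  · simp
  have : Infinite R := Infinite.of_injective _ Nat.cast_injective
  have hcomp : a.comp (X + 1) * b = a * b.comp (X + 1) :=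
    Polynomial.funext fun x => by simpa using h x
  suffices a * C (b.eval x₀) - b * C (a.eval x₀) = 0 by
    simpa [sub_eq_zero] using congrArg (eval x) this
  refine eq_zero_of_infinite_isRoot _ (Set.infinite_of_injective_forall_mem
    (f := fun n : ℕ => x₀ + n) (add_right_injective x₀ |>.comp Nat.cast_injective) fun n => ?_)
  have hn := congrArg (eval x₀) (comp_X_add_natCast_mul_eq_of_comp_X_add_one hcomp hb n)
  simp only [eval_mul, eval_comp, eval_add, eval_X, eval_natCast] at hn
  simp only [Set.mem_ofPred_eq, IsRoot.def, eval_sub, eval_mul, eval_C]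
  linear_combination hn

end Polynomial

namespace MvPolynomial

variable {R : Type*} [CommRing R]

noncomputable def shiftFst (c : R) : MvPolynomial (Fin 2) R →ₐ[R] MvPolynomial (Fin 2) R :=
  aeval ![X 0 + C c, X 1]

theorem eval_shiftFst (c x y : R) (P : MvPolynomial (Fin 2) R) :
    eval ![x, y] (shiftFst c P) = eval ![x + c, y] P := by
  induction P using MvPolynomial.induction_on with
  | C a => simp
  | add P Q hP hQ => simp [hP, hQ]
  | mul_X P i hP => rw [map_mul, map_mul, hP]; fin_cases i <;> simp [shiftFst]

noncomputable def specializeSnd (y : R) : MvPolynomial (Fin 2) R →ₐ[R] Polynomial R :=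
  aeval ![Polynomial.X, Polynomial.C y]

theorem eval_specializeSnd (x y : R) (P : MvPolynomial (Fin 2) R) :
    (specializeSnd y P).eval x = eval ![x, y] P := by
  induction P using MvPolynomial.induction_on with
  | C a => simp
  | add P Q hP hQ => simp [hP, hQ]
  | mul_X P i hP => rw [map_mul, Polynomial.eval_mul, hP]; fin_cases i <;> simp [specializeSnd]

theorem eval_mul_eval_eq_of_shiftFst_one [IsDomain R] [CharZero R] {p q : MvPolynomial (Fin 2) R}
    (h : shiftFst 1 p * q = p * shiftFst 1 q) (x x₀ y : R) :
    eval ![x, y] p * eval ![x₀, y] q = eval ![x, y] q * eval ![x₀, y] p := by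
  simp only [← eval_specializeSnd]
  refine Polynomial.eval_mul_eval_eq_of_ratio_periodic (fun x => ?_) x x₀
  simpa only [eval_specializeSnd, map_mul, eval_shiftFst] using congrArg (eval ![x, y]) h

end MvPolynomial

open MvPolynomial UpperHalfPlane Filter Topology

local notation "ℍₒ" => upperHalfPlaneSet

theorem deriv_mul_eq_of_comp_eventuallyEq {𝕜 : Type*} [NontriviallyNormedField 𝕜]
    {g φ : 𝕜 → 𝕜} {τ φ' : 𝕜} (hg : DifferentiableAt 𝕜 g (φ τ)) (hφ : HasDerivAt φ φ' τ)
    (h : g ∘ φ =ᶠ[𝓝 τ] g) : deriv g (φ τ) * φ' = deriv g τ := by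
  rw [← h.deriv_eq, (hg.hasDerivAt.comp τ hφ).deriv]

namespace AnalyticOnNhd

variable {𝕜 : Type*} [NontriviallyNormedField 𝕜] {U : Set 𝕜}

theorem eval_mvPolynomial_pair {f₀ f₁ : 𝕜 → 𝕜} (h₀ : AnalyticOnNhd 𝕜 f₀ U)
    (h₁ : AnalyticOnNhd 𝕜 f₁ U) (P : MvPolynomial (Fin 2) 𝕜) :
    AnalyticOnNhd 𝕜 (fun z => eval ![f₀ z, f₁ z] P) U := by
  simp_rw [← coe_aeval_eq_eval]
  exact AnalyticOnNhd.aeval_mvPolynomial (fun i => by fin_cases i <;> assumption) P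

theorem eqOn_zero_of_mul_eq_zero {A : Type*} [NormedRing A] [IsDomain A] [NormedAlgebra 𝕜 A]
    {u v : 𝕜 → A} (hu : AnalyticOnNhd 𝕜 u U) (hv : AnalyticOnNhd 𝕜 v U) (hU : IsPreconnected U)
    (huv : ∀ z ∈ U, u z * v z = 0) {z₀ : 𝕜} (hz₀ : z₀ ∈ U) (hv₀ : v z₀ ≠ 0) :
    ∀ z ∈ U, u z = 0 :=
  (eq_zero_or_eq_zero_of_mul_eq_zero hu hv huv hU).resolve_right fun h => hv₀ (h z₀ hz₀)

end AnalyticOnNhd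

theorem isPreconnected_upperHalfPlaneSet : IsPreconnected ℍₒ :=
  (convex_halfSpace_im_gt 0).isPreconnected

section Invariance

variable {g : ℂ → ℂ} {p q : MvPolynomial (Fin 2) ℂ}

theorem shiftFst_one_mul_eq_of_periodic (hg : DifferentiableOn ℂ g ℍₒ)
    (hT : ∀ τ ∈ ℍₒ, g (τ + 1) = g τ)
    (htr : ∀ R : MvPolynomial (Fin 2) ℂ, (∀ τ ∈ ℍₒ, eval ![τ, g τ] R = 0) → R = 0)
    (hde : ∀ τ ∈ ℍₒ, deriv g τ * eval ![τ, g τ] q = eval ![τ, g τ] p) :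
    shiftFst 1 p * q = p * shiftFst 1 q := by
  rw [← sub_eq_zero]
  refine htr _ fun τ hτ => ?_
  have hτ₁ : τ + 1 ∈ ℍₒ := by simpa using hτ
  have hderiv : deriv g (τ + 1) = deriv g τ := by
    simpa using deriv_mul_eq_of_comp_eventuallyEq (φ := (· + 1))
      (hg.differentiableAt (isOpen_upperHalfPlaneSet.mem_nhds hτ₁))
      ((hasDerivAt_id τ).add_const 1)
      (eventually_of_mem (isOpen_upperHalfPlaneSet.mem_nhds hτ) hT)
  have hde₁ := hde (τ + 1) hτ₁
  rw [hT τ hτ, hderiv] at hde₁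
  simp only [map_sub, map_mul, eval_shiftFst, ← hde₁, ← hde τ hτ]
  ring

theorem deriv_mul_eval_eq_of_periodic (hg : DifferentiableOn ℂ g ℍₒ)
    (hT : ∀ τ ∈ ℍₒ, g (τ + 1) = g τ)
    (htr : ∀ R : MvPolynomial (Fin 2) ℂ, (∀ τ ∈ ℍₒ, eval ![τ, g τ] R = 0) → R = 0)
    (hde : ∀ τ ∈ ℍₒ, deriv g τ * eval ![τ, g τ] q = eval ![τ, g τ] p)
    {τ₀ : ℂ} (hτ₀ : τ₀ ∈ ℍₒ) (hq : eval ![τ₀, g τ₀] q ≠ 0) :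
    ∀ τ ∈ ℍₒ, deriv g τ * eval ![τ₀, g τ] q = eval ![τ₀, g τ] p := by
  have hsep := eval_mul_eval_eq_of_shiftFst_one (shiftFst_one_mul_eq_of_periodic hg hT htr hde)
  have hga : AnalyticOnNhd ℂ g ℍₒ := hg.analyticOnNhd isOpen_upperHalfPlaneSet
  have hconst : AnalyticOnNhd ℂ (fun _ => τ₀) ℍₒ := analyticOnNhd_const
  have hvanish : ∀ τ ∈ ℍₒ,
      (deriv g τ * eval ![τ₀, g τ] q - eval ![τ₀, g τ] p) * eval ![τ, g τ] q = 0 := by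
    intro τ hτ
    linear_combination eval ![τ₀, g τ] q * hde τ hτ + hsep τ τ₀ (g τ)
  intro τ hτ
  rw [← sub_eq_zero]
  refine AnalyticOnNhd.eqOn_zero_of_mul_eq_zero ?_ (analyticOnNhd_id.eval_mvPolynomial_pair hga q)
    isPreconnected_upperHalfPlaneSet hvanish hτ₀ hq τ hτ
  exact (hga.deriv.mul (hconst.eval_mvPolynomial_pair hga q)).sub
    (hconst.eval_mvPolynomial_pair hga p)

theorem deriv_mul_eq_zero_of_neg_inv_invariant (hg : DifferentiableOn ℂ g ℍₒ)
    (hS : ∀ τ ∈ ℍₒ, g (-τ⁻¹) = g τ) {A B : ℂ → ℂ}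
    (h : ∀ τ ∈ ℍₒ, deriv g τ * B (g τ) = A (g τ)) : ∀ τ ∈ ℍₒ, deriv g τ * B (g τ) = 0 := by
  intro τ hτ
  have hτS : -τ⁻¹ ∈ ℍₒ := by simpa [inv_neg] using im_inv_neg_coe_pos ⟨τ, hτ⟩
  have hτ0 : τ ≠ 0 := fun h => by simp [h] at hτ
  have hderiv : deriv g (-τ⁻¹) * (τ ^ 2)⁻¹ = deriv g τ :=
    deriv_mul_eq_of_comp_eventuallyEq (φ := fun z => -z⁻¹)
      (hg.differentiableAt (isOpen_upperHalfPlaneSet.mem_nhds hτS))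
      (by simpa using (hasDerivAt_inv hτ0).fun_neg)
      (eventually_of_mem (isOpen_upperHalfPlaneSet.mem_nhds hτ) hS)
  have hS' := h _ hτS
  rw [hS τ hτ, show deriv g (-τ⁻¹) = τ ^ 2 * deriv g τ by rw [← hderiv]; field_simp] at hS'
  have hτ1 : (τ - 1) * (τ + 1) ≠ 0 := mul_ne_zero (sub_ne_zero.2 fun h => by simp [h] at hτ)
    fun h => by simp [eq_neg_of_add_eq_zero_left h] at hτ
  exact (mul_eq_zero.1 (by linear_combination hS' - h τ hτ :
    (τ - 1) * (τ + 1) * (deriv g τ * B (g τ)) = 0)).resolve_left hτ1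

end Invariance

/-- A holomorphic `SL₂(ℤ)`-invariant function `g` on the upper half-plane
`ℍ = {τ : 0 < Im τ}` which is transcendental over `ℂ(z)` satisfies no first-order rational
differential equation `g' = p(z,g)/q(z,g)`. -/
theorem statement_2 (g : ℂ → ℂ)
    (hg : DifferentiableOn ℂ g {z : ℂ | 0 < z.im})
    (hinv : ∀ a b c d : ℤ, a * d - b * c = 1 → ∀ τ : ℂ, 0 < τ.im →
      g (((a : ℂ) * τ + (b : ℂ)) / ((c : ℂ) * τ + (d : ℂ))) = g τ)
    (htr : ¬ ∃ P : MvPolynomial (Fin 2) ℂ, P ≠ 0 ∧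
      ∀ τ : ℂ, 0 < τ.im → MvPolynomial.eval ![τ, g τ] P = 0) :
    ¬ ∃ p q : MvPolynomial (Fin 2) ℂ,
      (¬ ∀ τ : ℂ, 0 < τ.im → MvPolynomial.eval ![τ, g τ] q = 0) ∧
      (∀ τ : ℂ, 0 < τ.im →
        deriv g τ * MvPolynomial.eval ![τ, g τ] q = MvPolynomial.eval ![τ, g τ] p) := by
  rintro ⟨p, q, hq, hde⟩
  push Not at hq
  obtain ⟨τ₀, hτ₀, hqτ₀⟩ := hq
  have htr' : ∀ R : MvPolynomial (Fin 2) ℂ, (∀ τ ∈ ℍₒ, eval ![τ, g τ] R = 0) → R = 0 :=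
    fun R hR => by_contra fun hR0 => htr ⟨R, hR0, hR⟩
  have hT : ∀ τ ∈ ℍₒ, g (τ + 1) = g τ := fun τ hτ => by
    simpa using hinv 1 1 0 1 (by norm_num) τ hτ
  have hS : ∀ τ ∈ ℍₒ, g (-τ⁻¹) = g τ := fun τ hτ => by
    simpa [neg_div] using hinv 0 (-1) 1 0 (by norm_num) τ hτ
  have hautonomous := deriv_mul_eval_eq_of_periodic hg hT htr' hde hτ₀ hqτ₀
  have hga : AnalyticOnNhd ℂ g ℍₒ := hg.analyticOnNhd isOpen_upperHalfPlaneSet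
  have hderiv : ∀ τ ∈ ℍₒ, deriv g τ = 0 :=
    AnalyticOnNhd.eqOn_zero_of_mul_eq_zero hga.deriv
      (analyticOnNhd_const.eval_mvPolynomial_pair hga q) isPreconnected_upperHalfPlaneSet
      (deriv_mul_eq_zero_of_neg_inv_invariant hg hS (A := fun y => eval ![τ₀, y] p)
        (B := fun y => eval ![τ₀, y] q) hautonomous) hτ₀ hqτ₀
  obtain ⟨c, hc⟩ := isOpen_upperHalfPlaneSet.exists_is_const_of_deriv_eq_zero
    isPreconnected_upperHalfPlaneSet hg hderiv
  exact htr ⟨X 1 - C c, fun h => by simpa using congrArg (eval ![0, c + 1]) h,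
    fun τ hτ => by simp [hc τ hτ]⟩
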